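/- If G is a graph whose domination polynomial equals that of a cycle, i.e., D(G,x) = D(C_n,x) with n ≥ 4, and G is a disjoint union of cycles C_{n_1}, ..., C_{n_k}, then k is odd. -/

import Mathlib

open Polynomial SimpleGraph

/-- `S` is a dominating set of `G`: every vertex is in `S` or adjacent to a vertex of `S`. -/
def IsDomSet {V : Type*} (G : SimpleGraph V) (S : Finset V) : Prop :=
  ∀ v : V, v ∈ S ∨ ∃ u ∈ S, G.Adj u v

/-- The domination polynomial `D(G,x) = ∑ d(G,i) xⁱ`. -/
noncomputable def domPoly {V : Type*} [Fintype V] (G : SimpleGraph V) : Polynomial ℤ :=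
  ∑ i ∈ Finset.range (Fintype.card V + 1),
    (Nat.card {S : Finset V // IsDomSet G S ∧ S.card = i} : ℤ) • (X : Polynomial ℤ) ^ i

/-- The disjoint union of a family of graphs. -/
def sigmaGraph {ι : Type*} {V : ι → Type*} (G : ∀ i, SimpleGraph (V i)) :
    SimpleGraph (Σ i, V i) where
  Adj x y := ∃ (i : ι) (u v : V i), (G i).Adj u v ∧ x = ⟨i, u⟩ ∧ y = ⟨i, v⟩
  symm := by
    constructor
    rintro x y ⟨i, u, v, h, rfl, rfl⟩
    exact ⟨i, v, u, h.symm, rfl, rfl⟩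
  loopless := by
    constructor
    rintro x ⟨i, u, v, h, rfl, heq⟩
    cases heq
    exact h.ne rfl

/-!
Evaluate at `x = -1`. The value `D(G, -1) = ∑_{S dominating} (-1)^|S|` is an isomorphism
invariant and multiplicative over disjoint unions. For the cycle `C_m`, a dominating set is a
cyclic 0/1-word of length `m` with no three consecutive zeros, so `D(C_m, -1)` is the trace of
`M^m` for a 4 × 4 transfer matrix `M` indexed by pairs of consecutive letters. Since `M^5 = M`,
the values are 4-periodic: `-1, -1, -1, 3`. Both are `≡ -1 (mod 4)`, so comparing
`D(G, -1) = ∏ D(C_{n_i}, -1) ≡ (-1)^k` with `D(C_n, -1) ≡ -1 (mod 4)` forces `k` odd.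
-/

open Finset Matrix

theorem Matrix.pow_apply_eq_sum {ι R : Type*} [Fintype ι] [DecidableEq ι] [CommSemiring R]
    (A : Matrix ι ι R) (m : ℕ) (s t : ι) :
    (A ^ m) s t = ∑ w : Fin m → ι,
      if (Fin.cons s w : Fin (m + 1) → ι) (Fin.last m) = t then
        ∏ i, A ((Fin.cons s w : Fin (m + 1) → ι) i.castSucc) (w i) else 0 := by
  induction m generalizing t with
  | zero => simp [one_apply]
  | succ m ih =>
    rw [pow_succ, mul_apply, ← (Fin.snocEquiv fun _ => ι).sum_comp, Fintype.sum_prod_type]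
    simp only [ih, sum_mul, ite_mul, zero_mul]
    rw [sum_comm]
    simp [Fin.snocEquiv, Fin.prod_univ_castSucc, Fin.cons_snoc_eq_snoc_cons]

theorem Fin.cons_last_castSucc {α : Type*} {k : ℕ} (w : Fin (k + 1) → α) (i : Fin (k + 1)) :
    (Fin.cons (w (Fin.last k)) w : Fin (k + 2) → α) i.castSucc = w (i - 1) := by
  cases i using Fin.cases with
  | zero => simp only [Fin.castSucc_zero, Fin.cons_zero]; congr 1; ext; simp [Fin.coe_neg_one]
  | succ j =>
    rw [← Fin.succ_castSucc, Fin.cons_succ, ← Fin.coeSucc_eq_succ, add_sub_cancel_right]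

theorem Matrix.trace_pow_succ_eq_sum {ι R : Type*} [Fintype ι] [DecidableEq ι] [CommSemiring R]
    (A : Matrix ι ι R) (k : ℕ) :
    trace (A ^ (k + 1)) = ∑ w : Fin (k + 1) → ι, ∏ i, A (w (i - 1)) (w i) := by
  simp_rw [trace, diag, pow_apply_eq_sum]
  rw [sum_comm]
  simp [Fin.cons_last_castSucc]

open Classical in
theorem domPoly_eq_sum {V : Type*} [Fintype V] (G : SimpleGraph V) :
    domPoly G = ∑ S with IsDomSet G S, X ^ #S := by
  rw [domPoly, ← sum_fiberwise_of_maps_to (g := card) (t := range (Fintype.card V + 1))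
    fun S _ => mem_range_succ_iff.mpr S.card_le_univ]
  refine sum_congr rfl fun i _ => ?_
  rw [sum_congr rfl fun S hS => by rw [(mem_filter.mp hS).2], sum_const, filter_filter,
    Nat.card_eq_fintype_card, Fintype.card_subtype, natCast_zsmul]

theorem isDomSet_map_iff {V W : Type*} {G : SimpleGraph V} {H : SimpleGraph W} (e : G ≃g H)
    (S : Finset V) : IsDomSet H (S.map e.toEquiv.toEmbedding) ↔ IsDomSet G S := by
  rw [IsDomSet, ← e.toEquiv.forall_congr_right]
  simp only [IsDomSet, mem_map, Equiv.coe_toEmbedding, EmbeddingLike.apply_eq_iff_eq,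
    exists_eq_right, exists_exists_and_eq_and]
  exact forall_congr' fun v =>
    or_congr_right (exists_congr fun u => and_congr_right fun _ => e.map_adj_iff)

theorem domPoly_congr {V W : Type*} [Fintype V] [Fintype W] {G : SimpleGraph V}
    {H : SimpleGraph W} (e : G ≃g H) : domPoly G = domPoly H := by
  classical
  rw [domPoly_eq_sum, domPoly_eq_sum]
  exact sum_equiv e.toEquiv.finsetCongr
    (fun S => by simp [Equiv.finsetCongr_apply, isDomSet_map_iff]) fun S _ => by simp

theorem isDomSet_sigmaGraph_iff {ι : Type*} [Fintype ι] {V : ι → Type*}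
    (G : ∀ i, SimpleGraph (V i)) (S : ∀ i, Finset (V i)) :
    IsDomSet (sigmaGraph G) (univ.sigma S) ↔ ∀ i, IsDomSet (G i) (S i) := by
  constructor
  · intro h i v
    rcases h ⟨i, v⟩ with hv | ⟨u, hu, j, a, b, hab, rfl, hb⟩
    · exact .inl (by simpa using hv)
    · cases hb
      exact .inr ⟨a, by simpa using hu, hab⟩
  · rintro h ⟨i, v⟩
    rcases h i v with hv | ⟨u, hu, huv⟩
    · exact .inl (by simpa using hv)
    · exact .inr ⟨⟨i, u⟩, by simpa using hu, i, u, v, huv, rfl, rfl⟩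

theorem domPoly_sigmaGraph {ι : Type*} [Fintype ι] {V : ι → Type*} [∀ i, Fintype (V i)]
    (G : ∀ i, SimpleGraph (V i)) : domPoly (sigmaGraph G) = ∏ i, domPoly (G i) := by
  classical
  simp only [domPoly_eq_sum, prod_univ_sum]
  refine sum_nbij' (fun T i => T.preimage (Sigma.mk i) sigma_mk_injective.injOn)
    (fun S => univ.sigma S) ?_ ?_ ?_ ?_ ?_
  · intro T hT
    rw [mem_filter_univ, ← sigma_preimage_mk_of_subset T (subset_univ _),
      isDomSet_sigmaGraph_iff] at hT
    simpa [Fintype.mem_piFinset] using hT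
  · intro S hS
    simp_all [Fintype.mem_piFinset, isDomSet_sigmaGraph_iff]
  · intro T _
    exact sigma_preimage_mk_of_subset T (subset_univ _)
  · intro S _
    ext i v
    simp
  · intro T _
    rw [prod_pow_eq_pow_sum, ← card_sigma, sigma_preimage_mk_of_subset T (subset_univ _)]

theorem isDomSet_cycleGraph_iff {k : ℕ} (S : Finset (Fin (k + 1))) :
    IsDomSet (cycleGraph (k + 1)) S ↔ ∀ v, v - 1 ∈ S ∨ v ∈ S ∨ v + 1 ∈ S := by
  cases k with
  | zero => simp [IsDomSet, Subsingleton.elim _ (0 : Fin 1)]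
  | succ k =>
    refine forall_congr' fun v => ?_
    have hadj : ∀ u, (cycleGraph (k + 2)).Adj u v ↔ u = v - 1 ∨ u = v + 1 := fun u => by
      rw [adj_comm, ← mem_neighborSet, cycleGraph_neighborSet]; rfl
    simp only [hadj, and_or_left, exists_or, exists_eq_right]
    tauto

/-- The contribution of a vertex of a cycle carrying the letter `b` between neighbours carrying
`a` and `c`: zero if the vertex is not dominated, otherwise the sign `(-1)^b`. -/
def cycleWeight (a b c : Bool) : ℤ := if a || b || c then (if b then -1 else 1) else 0

open Classical in
theorem sum_isDomSet_cycleGraph (k : ℕ) :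
    ∑ S with IsDomSet (cycleGraph (k + 1)) S, (-1 : ℤ) ^ #S =
      ∑ u : Fin (k + 1) → Bool, ∏ i, cycleWeight (u (i - 1)) (u i) (u (i + 1)) := by
  simp only [cycleWeight, prod_ite_zero]
  rw [sum_filter]
  refine sum_nbij' (fun S i => decide (i ∈ S)) (fun u => univ.filter (u · = true))
    (by simp) (by simp) (fun S _ => by ext; simp) (fun u _ => by ext; simp) fun S _ => ?_
  simp [isDomSet_cycleGraph_iff, prod_ite_mem, or_assoc]

/-- The transfer matrix of `cycleWeight`; its states are pairs `(u i, u (i + 1))`. -/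
def cycleTransfer : Matrix (Bool × Bool) (Bool × Bool) ℤ :=
  Matrix.of fun p q => if p.2 = q.1 then cycleWeight p.1 p.2 q.2 else 0

theorem trace_cycleTransfer_pow_succ_eq_sum (k : ℕ) :
    trace (cycleTransfer ^ (k + 1)) =
      ∑ u : Fin (k + 1) → Bool, ∏ i, cycleWeight (u (i - 1)) (u i) (u (i + 1)) := by
  rw [trace_pow_succ_eq_sum, ← (Equiv.arrowProdEquivProdArrow _ _ _).symm.sum_comp,
    Fintype.sum_prod_type]
  refine sum_congr rfl fun u _ => ?_
  rw [Fintype.sum_eq_single (fun j => u (j + 1))]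
  · simp [cycleTransfer]
  · intro v hv
    obtain ⟨j, hj⟩ := Function.ne_iff.mp hv
    refine prod_eq_zero (mem_univ (j + 1)) ?_
    simp [cycleTransfer, hj]

-- The minimal polynomial of `cycleTransfer` is `X (X + 1) (X² + 1)`, a divisor of `X⁵ - X`.
theorem cycleTransfer_pow_add_five (j : ℕ) :
    cycleTransfer ^ (j + 5) = cycleTransfer ^ (j + 1) := by
  rw [pow_add, pow_add, show cycleTransfer ^ 5 = cycleTransfer ^ 1 by decide]

theorem trace_cycleTransfer_pow {m : ℕ} (hm : 0 < m) :
    trace (cycleTransfer ^ m) = if 4 ∣ m then 3 else -1 := by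
  induction m using Nat.strong_induction_on with
  | _ m ih =>
    rcases le_or_gt m 4 with hm4 | hm4
    · interval_cases m <;> decide
    · obtain ⟨j, rfl⟩ : ∃ j, m = j + 5 := ⟨m - 5, by omega⟩
      rw [cycleTransfer_pow_add_five, ih (j + 1) (by omega) (by omega)]
      simp only [show 4 ∣ j + 5 ↔ 4 ∣ j + 1 by omega]

theorem eval_neg_one_domPoly_cycleGraph {m : ℕ} (hm : 0 < m) :
    (domPoly (cycleGraph m)).eval (-1) = if 4 ∣ m then 3 else -1 := by
  classical
  obtain ⟨k, rfl⟩ : ∃ k, m = k + 1 := ⟨m - 1, by omega⟩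
  rw [← trace_cycleTransfer_pow hm, trace_cycleTransfer_pow_succ_eq_sum, domPoly_eq_sum,
    eval_finsetSum, ← sum_isDomSet_cycleGraph]
  simp

theorem odd_number_of_cycles (n : ℕ) (hn : 4 ≤ n) (k : ℕ) (ns : Fin k → ℕ)
    (hpos : ∀ i, 0 < ns i) (V : Type) [Fintype V] (G : SimpleGraph V)
    (hG : Nonempty (G ≃g sigmaGraph (fun i => cycleGraph (ns i))))
    (hD : domPoly G = domPoly (cycleGraph n)) :
    Odd k := by
  obtain ⟨e⟩ := hG
  have hcycle : ∀ m, 0 < m → (((domPoly (cycleGraph m)).eval (-1) : ℤ) : ZMod 4) = -1 := by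
    intro m hm
    rw [eval_neg_one_domPoly_cycleGraph hm]
    split_ifs <;> decide
  have h := congrArg (fun p : ℤ[X] => ((p.eval (-1) : ℤ) : ZMod 4)) hD
  simp only [domPoly_congr e, domPoly_sigmaGraph, eval_prod, Int.cast_prod, hcycle _ (hpos _),
    hcycle n (by omega), prod_const, card_univ, Fintype.card_fin] at h
  exact (neg_one_pow_eq_neg_one_iff_odd (by decide)).mp h
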